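/- Let G and H be non-trivial groups and let H act faithfully on a set X such that H_X is not of torsion-type. If G ≀_X H is not finitely generated and H is finitely invariably generated, then G ≀_X H is invariably generated but not finitely invariably generated. -/

import Mathlib

open Function SemidirectProduct

/-- A subset `S` invariably generates `K` if replacing each element of `S` by an
arbitrary conjugate always yields a generating set of `K`. -/
def InvariablyGenerates (K : Type*) [Group K] (S : Set K) : Prop :=
  ∀ a : K → K, Subgroup.closure ((fun s => (a s)⁻¹ * s * a s) '' S) = ⊤

/-- `K` is invariably generated if `K` invariably generates itself. -/
def IsIG (K : Type*) [Group K] : Prop :=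
  InvariablyGenerates K Set.univ

/-- `K` is finitely invariably generated if some finite subset invariably generates it. -/
def IsFIG (K : Type*) [Group K] : Prop :=
  ∃ S : Set K, S.Finite ∧ InvariablyGenerates K S

/-- The base of the wreath product `G ≀_X H`: the restricted direct product
`⨁_{x ∈ X} G`, realized as the finitely supported functions `X → G`. -/
def WreathBase (G X : Type*) [Group G] : Subgroup (X → G) where
  carrier := {f | (mulSupport f).Finite}
  one_mem' := by simp
  mul_mem' {f g} hf hg := (Set.Finite.union hf hg).subset (mulSupport_mul f g)
  inv_mem' {f} hf := by simpa using hf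

lemma mem_wreathBase {G X : Type*} [Group G] {f : X → G} :
    f ∈ WreathBase G X ↔ (mulSupport f).Finite := Iff.rfl

/-- The permutation action of `H` on the base, `(h • f) x = f (h⁻¹ • x)`, so that in the
wreath product conjugation by `h` (i.e. `h · g^{(x)} · h⁻¹`) sends the coordinate subgroup
`G_x` to `G_{h • x}`; equivalently `h⁻¹ · g^{(x)} · h = g^{(h⁻¹ • x)}`, which is the
left-action rendering of "conjugation multiplies indices on the right". -/
def wreathAut (G H X : Type*) [Group G] [Group H] [MulAction H X] :
    H →* MulAut (WreathBase G X) where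
  toFun h :=
    { toFun := fun f => ⟨fun x => (f : X → G) (h⁻¹ • x),
        mem_wreathBase.mpr (((mem_wreathBase.mp f.2).image (h • ·)).subset
          fun x hx => ⟨h⁻¹ • x, hx, by simp⟩)⟩
      invFun := fun f => ⟨fun x => (f : X → G) (h • x),
        mem_wreathBase.mpr (((mem_wreathBase.mp f.2).image (h⁻¹ • ·)).subset
          fun x hx => ⟨h • x, hx, by simp⟩)⟩
      left_inv := fun f => Subtype.ext (funext fun x => by simp)
      right_inv := fun f => Subtype.ext (funext fun x => by simp)
      map_mul' := fun f g => Subtype.ext (funext fun x => by simp) }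
  map_one' := by
    ext f x
    simp
  map_mul' h₁ h₂ := by
    ext f x
    simp [mul_smul]

/-- The restricted wreath product `G ≀_X H`. -/
abbrev WreathProduct (G H X : Type*) [Group G] [Group H] [MulAction H X] :=
  WreathBase G X ⋊[wreathAut G H X] H

open scoped Classical in
/-- `g^{(y)}`: the element of the base which is `g` in coordinate `y` and trivial elsewhere. -/
noncomputable def WreathBase.single {G : Type*} (X : Type*) [Group G] (y : X) :
    G →* WreathBase G X where
  toFun g := ⟨fun x => if x = y then g else 1,
    mem_wreathBase.mpr ((Set.finite_singleton y).subset fun x hx => by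
      by_contra hxy
      exact hx (if_neg hxy))⟩
  map_one' := Subtype.ext (funext fun x => by simp)
  map_mul' g₁ g₂ := Subtype.ext (funext fun x => by by_cases h : x = y <;> simp [h])

/-- The embedding of `G` onto the coordinate subgroup `G_y` of the wreath product. -/
noncomputable def coordHom (G H : Type*) {X : Type*} [Group G] [Group H] [MulAction H X]
    (y : X) : G →* WreathProduct G H X :=
  SemidirectProduct.inl.comp (WreathBase.single X y)

/-- `H_X` is of torsion-type if there is `y ∈ X` such that for every `x` in the `H`-orbit
of `y` and every `k ∈ H`, the `⟨k⟩`-orbit of `x` is finite. -/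
def IsTorsionType (H X : Type*) [Group H] [MulAction H X] : Prop :=
  ∃ y : X, ∀ x ∈ MulAction.orbit H y, ∀ k : H, (Set.range fun n : ℤ => k ^ n • x).Finite

/-- A `Γ_z`-set: a set of base elements containing, for every `g ∈ G`, an element whose
coordinate at `z` is `g`. -/
def IsGammaSet {G X : Type*} [Group G] (z : X) (Γ : Set (WreathBase G X)) : Prop :=
  ∀ g : G, ∃ f ∈ Γ, (f : X → G) z = g


/-!
Let `T` be generated by arbitrary conjugates of all elements of `W = G ≀_X H`. Since `H` is
invariably generated, `T` maps onto `H`, so `T` contains a conjugate of every element of `W` by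
an element of the base. Fix `q ∈ X`; as `H_X` is not of torsion-type, some `x` in the orbit of `q`
has an infinite `⟨k⟩`-orbit. After conjugating `T` by a base element we may assume `k ∈ T`, so the
subgroup `A = {v | v^{(x)} ∈ T}` of `G` is the same at every point `k ^ j • x`. For `g ∈ G`, `T`
contains a base-conjugate `u` of `g^{(x)} k`, and a high power of `u` carries `v^{(k^{-N} x)}` to
`(g v g⁻¹)^{(k^N x)}`: along the way the coordinate passes `x` exactly once, and far out the base
conjugator is trivial. So `A` is normal and meets every conjugacy class, whence `A = G`. Moving
`x` to `q` by an element of `T`, every coordinate subgroup lies in `T`, hence so does the base,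
and `T = W`. Finally a finitely invariably generated group is finitely generated (take trivial
conjugators), which `W` is not.
-/

section InvariableGeneration

variable {K Q : Type*} [Group K] [Group Q]

theorem Subgroup.conj_mem_iff_of_mem {T : Subgroup K} {t : K} (ht : t ∈ T) (u : K) :
    t * u * t⁻¹ ∈ T ↔ u ∈ T := by
  rw [T.mul_mem_cancel_right (inv_mem ht), T.mul_mem_cancel_left ht]

theorem Subgroup.Normal.eq_top_of_forall_conj_mem {N : Subgroup K} (hN : N.Normal)
    (h : ∀ g : K, ∃ c : K, c * g * c⁻¹ ∈ N) : N = ⊤ := by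
  refine eq_top_iff.mpr fun g _ => ?_
  obtain ⟨c, hc⟩ := h g
  simpa [mul_assoc] using hN.conj_mem _ hc c⁻¹

theorem InvariablyGenerates.eq_top_of_forall_conj_mem {S : Set K}
    (hS : InvariablyGenerates K S) {T : Subgroup K} (hT : ∀ s ∈ S, ∃ c : K, c * s * c⁻¹ ∈ T) :
    T = ⊤ := by
  classical
  choose! c hc using hT
  rw [eq_top_iff, ← hS fun s => (c s)⁻¹, Subgroup.closure_le]
  rintro _ ⟨s, hs, rfl⟩
  simpa using hc s hs

theorem InvariablyGenerates.map_eq_top {S : Set Q} (hS : InvariablyGenerates Q S) {f : K →* Q}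
    (hf : Function.Surjective f) {T : Subgroup K} (hT : ∀ w : K, ∃ c : K, c * w * c⁻¹ ∈ T) :
    T.map f = ⊤ := by
  refine hS.eq_top_of_forall_conj_mem fun s _ => ?_
  obtain ⟨w, rfl⟩ := hf s
  obtain ⟨c, hc⟩ := hT w
  exact ⟨f c, _, hc, by simp⟩

theorem IsFIG.fg (h : IsFIG K) : Group.FG K := by
  obtain ⟨S, hfin, hS⟩ := h
  exact Group.fg_iff.mpr ⟨S, by simpa using hS fun _ => 1, hfin⟩

end InvariableGeneration

section ZPowOrbit

variable {H X : Type*} [Group H] [MulAction H X]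

open MulAction in
theorem injective_zpow_smul_of_infinite_range {k : H} {x : X}
    (hk : (Set.range fun n : ℤ => k ^ n • x).Infinite) :
    Injective fun n : ℤ => k ^ n • x := by
  contrapose! hk
  obtain ⟨a, b, hab, hne⟩ := Function.not_injective_iff.mp hk
  set p := minimalPeriod (k • ·) x
  have hp : 0 < p := by
    have hdvd : (p : ℤ) ∣ a - b := by
      rw [← zpow_smul_eq_iff_minimalPeriod_dvd, sub_eq_neg_add, zpow_add, mul_smul, hab,
        ← mul_smul, ← zpow_add, neg_add_cancel, zpow_zero, one_smul]
    refine Nat.pos_of_ne_zero fun hp0 => hne ?_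
    rwa [hp0, Nat.cast_zero, zero_dvd_iff, sub_eq_zero] at hdvd
  refine ((Set.finite_Ico 0 (p : ℤ)).image fun n : ℤ => k ^ n • x).subset ?_
  rintro _ ⟨n, rfl⟩
  exact ⟨n % p, ⟨Int.emod_nonneg n (by omega), Int.emod_lt_of_pos n (by omega)⟩,
    zpow_smul_mod_minimalPeriod k x n⟩

theorem exists_injective_zpow_smul_of_not_isTorsionType (htt : ¬ IsTorsionType H X) (q : X) :
    ∃ x ∈ MulAction.orbit H q, ∃ k : H, Injective fun n : ℤ => k ^ n • x := by
  simp only [IsTorsionType, not_exists, not_forall] at htt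
  obtain ⟨x, hx, k, hk⟩ := htt q
  exact ⟨x, hx, k, injective_zpow_smul_of_infinite_range hk⟩

end ZPowOrbit

namespace WreathBase

open scoped Classical

variable {G H X : Type*} [Group G] [Group H] [MulAction H X]

theorem single_apply (y : X) (g : G) (p : X) :
    (single X y g : X → G) p = if p = y then g else 1 := rfl

theorem wreathAut_apply_coe (h : H) (f : WreathBase G X) (p : X) :
    (wreathAut G H X h f : X → G) p = (f : X → G) (h⁻¹ • p) := rfl

theorem wreathAut_single (h : H) (y : X) (g : G) :
    wreathAut G H X h (single X y g) = single X (h • y) g := by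
  ext p
  rw [wreathAut_apply_coe, single_apply, single_apply]
  exact if_congr inv_smul_eq_iff rfl rfl

theorem conj_single (b : WreathBase G X) (y : X) (v : G) :
    b * single X y v * b⁻¹ = single X y ((b : X → G) y * v * ((b : X → G) y)⁻¹) := by
  ext p
  by_cases hp : p = y <;> simp [single_apply, hp]

theorem iSup_range_single : ⨆ y : X, (single X y : G →* WreathBase G X).range = ⊤ := by
  suffices h : ∀ (s : Finset X) (f : WreathBase G X), mulSupport (f : X → G) ⊆ s →
      f ∈ ⨆ y : X, (single X y : G →* WreathBase G X).range from
    eq_top_iff.mpr fun f _ => h (mem_wreathBase.mp f.2).toFinset f (by simp)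
  intro s
  induction s using Finset.induction_on with
  | empty =>
    intro f hf
    rw [Finset.coe_empty, Set.subset_empty_iff, mulSupport_eq_empty_iff] at hf
    rw [show f = 1 from Subtype.ext hf]
    exact one_mem _
  | insert p s _ ih =>
    intro f hf
    have hrest :
        mulSupport ((single X p ((f : X → G) p)⁻¹ * f : WreathBase G X) : X → G) ⊆ s := by
      intro q hq
      by_cases hqp : q = p
      · simp [hqp, single_apply] at hq
      · have hq' := hf (by simpa [single_apply, hqp] using hq)
        simpa [hqp] using hq'
    rw [← mul_inv_cancel_left (single X p ((f : X → G) p)) f, ← map_inv]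
    exact mul_mem (Subgroup.mem_iSup_of_mem p ⟨_, rfl⟩) (ih _ hrest)

end WreathBase

namespace WreathProduct

variable {G H X : Type*} [Group G] [Group H] [MulAction H X]

theorem conj_inl (t : WreathProduct G H X) (f : WreathBase G X) :
    t * inl f * t⁻¹ = inl (t.left * wreathAut G H X t.right f * t.left⁻¹) := by
  ext <;> simp [mul_assoc]

theorem conj_coordHom (t : WreathProduct G H X) (y : X) (v : G) :
    t * coordHom G H y v * t⁻¹ = coordHom G H (t.right • y)
      ((t.left : X → G) (t.right • y) * v * ((t.left : X → G) (t.right • y))⁻¹) := by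
  rw [coordHom, MonoidHom.comp_apply, conj_inl, WreathBase.wreathAut_single,
    WreathBase.conj_single]
  rfl

theorem inr_conj_coordHom (h : H) (y : X) (v : G) :
    inr h * coordHom G H y v * (inr h)⁻¹ = coordHom G H (h • y) v := by
  rw [conj_coordHom]
  simp

theorem commute_inl_coordHom {c : WreathBase G X} {y : X} (hc : (c : X → G) y = 1) (v : G) :
    Commute (inl c) (coordHom G H y v) := by
  rw [Commute, SemiconjBy, ← mul_inv_eq_iff_eq_mul, conj_coordHom]
  simp [hc]

open scoped Classical in
theorem conj_coordHom_mul_inr_pow {k : H} {x : X} (hinj : Injective fun n : ℤ => k ^ n • x)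
    (g v : G) (n : ℕ) (j : ℤ) :
    (coordHom G H x g * inr k) ^ n * coordHom G H (k ^ j • x) v *
        ((coordHom G H x g * inr k) ^ n)⁻¹
      = coordHom G H (k ^ (j + n) • x) (if j < 0 ∧ 0 ≤ j + n then g * v * g⁻¹ else v) := by
  induction n with
  | zero => simp [show ¬(j < 0 ∧ 0 ≤ j) by omega]
  | succ n ih =>
    rw [pow_succ', mul_inv_rev, show ∀ a b c d : WreathProduct G H X,
      a * b * c * (d * a⁻¹) = a * (b * c * d) * a⁻¹ from fun _ _ _ _ => by group, ih,
      conj_coordHom]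
    have hright : (coordHom G H x g * inr k).right = k := by simp [coordHom]
    have hleft : (coordHom G H x g * inr k).left = WreathBase.single X x g := by simp [coordHom]
    have hx : k ^ (j + n + 1) • x = x ↔ j + n + 1 = 0 := by
      simpa using hinj.eq_iff (a := j + n + 1) (b := 0)
    rw [hright, hleft, smul_smul, mul_self_zpow, WreathBase.single_apply, Nat.cast_succ,
      ← add_assoc]
    by_cases h0 : j + n + 1 = 0
    · rw [if_pos (hx.mpr h0), if_neg (by omega), if_pos (by omega)]
    · rw [if_neg (mt hx.mp h0)]
      simp only [one_mul, inv_one, mul_one]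
      congr 1
      exact if_congr (by omega) rfl rfl

/-- `T` contains a conjugate of every element by an element of the base. -/
def MeetsBaseConjugacyClasses (T : Subgroup (WreathProduct G H X)) : Prop :=
  ∀ w : WreathProduct G H X, ∃ b : WreathBase G X, inl b * w * (inl b)⁻¹ ∈ T

variable {T : Subgroup (WreathProduct G H X)}

theorem meetsBaseConjugacyClasses_of_map_rightHom_eq_top
    (hconj : ∀ w, ∃ c, c * w * c⁻¹ ∈ T) (hH : T.map rightHom = ⊤) :
    MeetsBaseConjugacyClasses T := by
  intro w
  obtain ⟨c, hc⟩ := hconj w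
  obtain ⟨t, ht, htc⟩ : c.right ∈ T.map rightHom := hH ▸ Subgroup.mem_top _
  have hinl : inl (t⁻¹ * c).left = t⁻¹ * c := by
    ext <;> simp_all
  refine ⟨(t⁻¹ * c).left, ?_⟩
  rw [hinl, show t⁻¹ * c * w * (t⁻¹ * c)⁻¹ = t⁻¹ * (c * w * c⁻¹) * t⁻¹⁻¹ by group]
  exact (Subgroup.conj_mem_iff_of_mem (inv_mem ht) _).mpr hc

theorem MeetsBaseConjugacyClasses.comap_conj (hT : MeetsBaseConjugacyClasses T)
    (b : WreathBase G X) :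
    MeetsBaseConjugacyClasses
      (T.comap (MulAut.conj (inl b : WreathProduct G H X)).toMonoidHom) := by
  intro w
  obtain ⟨b', hb'⟩ := hT w
  refine ⟨b⁻¹ * b', ?_⟩
  rw [Subgroup.mem_comap]
  convert hb' using 1
  simp [mul_assoc]

theorem MeetsBaseConjugacyClasses.exists_mem_right_eq (hT : MeetsBaseConjugacyClasses T)
    (h : H) : ∃ t ∈ T, t.right = h :=
  let ⟨_, hb⟩ := hT (inr h)
  ⟨_, hb, by simp⟩

theorem coordHom_zpow_smul_mem_iff {k : H} (hk : inr k ∈ T) (x : X) (j : ℤ) (v : G) :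
    coordHom G H (k ^ j • x) v ∈ T ↔ coordHom G H x v ∈ T := by
  rw [← inr_conj_coordHom, map_zpow, Subgroup.conj_mem_iff_of_mem (zpow_mem hk j)]

theorem coordHom_mem_of_conj_mem (t : WreathProduct G H X) {y : X}
    (h : ∀ v, t * coordHom G H y v * t⁻¹ ∈ T) (v : G) : coordHom G H (t.right • y) v ∈ T := by
  have ha := h (((t.left : X → G) (t.right • y))⁻¹ * v * (t.left : X → G) (t.right • y))
  rw [conj_coordHom] at ha
  simpa [mul_assoc] using ha

theorem MeetsBaseConjugacyClasses.normal_comap_coordHom (hT : MeetsBaseConjugacyClasses T)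
    {k : H} (hk : inr k ∈ T) {x : X} (hinj : Injective fun n : ℤ => k ^ n • x) :
    (T.comap (coordHom G H x)).Normal := by
  refine ⟨fun v hv g => ?_⟩
  rw [Subgroup.mem_comap] at hv ⊢
  obtain ⟨c, hc⟩ := hT (coordHom G H x g * inr k)
  obtain ⟨N, hN, hcN, hc'N⟩ : ∃ N : ℕ, 0 < N ∧ (c : X → G) (k ^ (N : ℤ) • x) = 1 ∧
      (c : X → G) (k ^ (-(N : ℤ)) • x) = 1 := by
    have hsupp := mem_wreathBase.mp c.2
    have hfin := (hsupp.preimage (hinj.comp Nat.cast_injective).injOn).union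
      (hsupp.preimage (hinj.comp (neg_injective.comp Nat.cast_injective)).injOn)
    obtain ⟨M, hM⟩ := hfin.bddAbove
    have hnot : M + 1 ∉ _ := fun h => absurd (hM h) (by omega)
    simp only [Set.mem_union, Set.mem_preimage, mem_mulSupport, not_or, not_not,
      Function.comp_apply] at hnot
    exact ⟨M + 1, by omega, hnot⟩
  set ρ := coordHom G H x g * inr k
  have hpow := pow_mem hc (2 * N)
  rw [conj_pow] at hpow
  have hshift := conj_coordHom_mul_inr_pow hinj g v (2 * N) (-N)
  rw [if_pos (by omega), show -(N : ℤ) + ((2 * N : ℕ) : ℤ) = N by omega] at hshift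
  have hconj : inl c * ρ ^ (2 * N) * (inl c)⁻¹ * coordHom G H (k ^ (-(N : ℤ)) • x) v *
      (inl c * ρ ^ (2 * N) * (inl c)⁻¹)⁻¹ = coordHom G H (k ^ (N : ℤ) • x) (g * v * g⁻¹) :=
    calc _ = inl c * (ρ ^ (2 * N) * ((inl c)⁻¹ * coordHom G H (k ^ (-(N : ℤ)) • x) v * inl c) *
          (ρ ^ (2 * N))⁻¹) * (inl c)⁻¹ := by group
      _ = inl c * coordHom G H (k ^ (N : ℤ) • x) (g * v * g⁻¹) * (inl c)⁻¹ := by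
          rw [(commute_inl_coordHom hc'N v).inv_mul_cancel, hshift]
      _ = _ := (commute_inl_coordHom hcN _).mul_inv_cancel
  rw [← coordHom_zpow_smul_mem_iff hk x N, ← hconj, Subgroup.conj_mem_iff_of_mem hpow,
    coordHom_zpow_smul_mem_iff hk]
  exact hv

theorem MeetsBaseConjugacyClasses.comap_coordHom_eq_top (hT : MeetsBaseConjugacyClasses T)
    {k : H} (hk : inr k ∈ T) {x : X} (hinj : Injective fun n : ℤ => k ^ n • x) :
    T.comap (coordHom G H x) = ⊤ :=
  (hT.normal_comap_coordHom hk hinj).eq_top_of_forall_conj_mem fun γ => by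
    obtain ⟨b, hb⟩ := hT (coordHom G H x γ)
    rw [conj_coordHom] at hb
    exact ⟨(b : X → G) x, by simpa using hb⟩

theorem MeetsBaseConjugacyClasses.coordHom_mem (hT : MeetsBaseConjugacyClasses T)
    (htt : ¬ IsTorsionType H X) (q : X) (v : G) : coordHom G H q v ∈ T := by
  obtain ⟨x, ⟨h, rfl⟩, k, hinj⟩ := exists_injective_zpow_smul_of_not_isTorsionType htt q
  obtain ⟨b, hb⟩ := hT (inr k)
  have hx : ∀ v, coordHom G H (h • q) v ∈ T := by
    have htop := (hT.comap_conj b).comap_coordHom_eq_top (k := k) hb hinj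
    simpa using coordHom_mem_of_conj_mem (inl b) (T := T) fun v =>
      (Subgroup.mem_comap.mp (htop ▸ Subgroup.mem_top v : _))
  obtain ⟨t, ht, hth⟩ := hT.exists_mem_right_eq h⁻¹
  simpa [hth] using
    coordHom_mem_of_conj_mem t (fun v => (Subgroup.conj_mem_iff_of_mem ht _).mpr (hx v)) v

theorem MeetsBaseConjugacyClasses.eq_top (hT : MeetsBaseConjugacyClasses T)
    (htt : ¬ IsTorsionType H X) : T = ⊤ := by
  have hbase : ∀ f, inl f ∈ T := by
    have : ⊤ ≤ T.comap inl := by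
      rw [← WreathBase.iSup_range_single, iSup_le_iff]
      rintro y _ ⟨v, rfl⟩
      exact hT.coordHom_mem htt y v
    exact fun f => this trivial
  refine eq_top_iff.mpr fun w _ => ?_
  obtain ⟨b, hb⟩ := hT (inr w.right)
  rw [← inl_left_mul_inr_right w]
  exact mul_mem (hbase _) ((Subgroup.conj_mem_iff_of_mem (hbase b) _).mp hb)

end WreathProduct

theorem stmt_3_general (G H X : Type*) [Group G] [Group H]
    [MulAction H X] (htt : ¬ IsTorsionType H X)
    (hfg : ¬ Group.FG (WreathProduct G H X)) (hH : IsFIG H) :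
    IsIG (WreathProduct G H X) ∧ ¬ IsFIG (WreathProduct G H X) := by
  refine ⟨fun a => ?_, fun h => hfg h.fg⟩
  set T := Subgroup.closure ((fun s => (a s)⁻¹ * s * a s) '' Set.univ)
  have hconj : ∀ w, ∃ c, c * w * c⁻¹ ∈ T :=
    fun w => ⟨(a w)⁻¹, Subgroup.subset_closure ⟨w, trivial, by simp⟩⟩
  obtain ⟨S, -, hS⟩ := hH
  exact (WreathProduct.meetsBaseConjugacyClasses_of_map_rightHom_eq_top hconj
    (hS.map_eq_top rightHom_surjective hconj)).eq_top htt

theorem stmt_3 (G H X : Type*) [Group G] [Group H] [Nontrivial G] [Nontrivial H]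
    [MulAction H X] [FaithfulSMul H X] (htt : ¬ IsTorsionType H X)
    (hfg : ¬ Group.FG (WreathProduct G H X)) (hH : IsFIG H) :
    IsIG (WreathProduct G H X) ∧ ¬ IsFIG (WreathProduct G H X) :=
  stmt_3_general G H X htt hfg hH
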